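/- arXiv:1501.04511 — 3 statements merged into one kernel-verified Lean document; each statement's English description precedes it below -/
import Mathlib

section
/- In any sequence of ADD and FETCH operations performed on a Q-store starting from the empty Q-store, if at the end every element of the Q-store has been accessed (f(i).ACCESSED = + for all i), then the Q-store behaved as a queue: the FETCH operations returned the added symbols in first-in-first-out order, i.e. each FETCH accessed the earliest unaccessed element of the store. -/
/-! ### Q-stores over an alphabet `S`.  An entry records a symbol (the initial
dummy symbol `†` is `none`), an ACCESSED flag and a MARKED flag. -/

abbrev QEntry (S : Type) := Option S × Bool × Bool

abbrev QStore (S : Type) := List (QEntry S)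

/-- The empty Q-store: a single dummy entry, accessed but unmarked. -/
def emptyQStore (S : Type) : QStore S := [(none, true, false)]

/-- Events on a Q-store: `add x`, or `fetch i j` which accesses the unaccessed
element `i`, witnessed by an earlier accessed-but-unmarked element `j`. -/
inductive QEvt (S : Type)
  | add : S → QEvt S
  | fetch : ℕ → ℕ → QEvt S

/-- Single steps on a Q-store: ADD appends an unaccessed, unmarked entry;
FETCH chooses `i` unaccessed with some `j < i` accessed and unmarked, and sets
`i` to accessed and `j` to marked. -/
inductive QStep {S : Type} : QStore S → QEvt S → QStore S → Prop
  | add {s : QStore S} {x : S} : QStep s (.add x) (s ++ [(some x, false, false)])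
  | fetch {s : QStore S} {i j : ℕ} {e e' : QEntry S} :
      j < i → i < s.length →
      s[i]? = some e → e.2.1 = false →
      s[j]? = some e' → e'.2.1 = true → e'.2.2 = false →
      QStep s (.fetch i j) ((s.set i (e.1, true, e.2.2)).set j (e'.1, true, true))

/-- Runs of a sequence of ADD/FETCH operations on a Q-store. -/
inductive QRun {S : Type} : QStore S → List (QEvt S) → QStore S → Prop
  | nil {s : QStore S} : QRun s [] s
  | cons {s s' s'' : QStore S} {e : QEvt S} {es : List (QEvt S)} :
      QStep s e s' → QRun s' es s'' → QRun s (e :: es) s''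

/-!
Call `m` a frontier of a store when every accessed position is at most `m` and every accessed
but unmarked position equals `m`. A FETCH of `i` witnessed by `j` needs `j` accessed and
unmarked, so `j` is the frontier and `i > j`; afterwards `i` is a frontier. Frontiers therefore
only move up, and every later FETCH lands above the current one, so an unaccessed position below
a frontier stays unaccessed forever. If some FETCH of `i` found an unaccessed `i' < i`, that
position would lie below the new frontier `i` and would still be unaccessed at the end.
-/

variable {S : Type}

def IsFrontier (s : QStore S) (m : ℕ) : Prop :=
  ∀ k e, s[k]? = some e → e.2.1 = true → k ≤ m ∧ (e.2.2 = false → k = m)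

theorem isFrontier_emptyQStore : IsFrontier (emptyQStore S) 0 := by
  rintro (_ | k) e he -
  · simp_all [emptyQStore]
  · simp [emptyQStore] at he

namespace QStep

variable {s s' : QStore S} {ev : QEvt S} {i j k m : ℕ} {e : QEntry S}

theorem right_unique {s'' : QStore S} (h : QStep s ev s') (h' : QStep s ev s'') : s' = s'' := by
  cases h with
  | add => cases h'; rfl
  | fetch _ _ hi _ hj _ _ =>
    cases h' with
    | fetch _ _ hi' _ hj' _ _ => simp_all

theorem lt_length_of_fetch (h : QStep s (.fetch i j) s') : i < s.length := by
  cases h; assumption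

theorem getElem?_eq_of_not_accessed (h : QStep s ev s') (he : s[k]? = some e)
    (hacc : e.2.1 = false) (hk : ∀ j, ev ≠ .fetch k j) : s'[k]? = some e := by
  cases h with
  | add => rwa [List.getElem?_append_left (List.getElem?_eq_some_iff.mp he).1]
  | @fetch i j _ _ _ _ _ _ hj hjacc _ =>
    have hki : k ≠ i := by rintro rfl; exact hk j rfl
    have hkj : k ≠ j := by rintro rfl; simp_all
    rwa [List.getElem?_set_ne hkj.symm, List.getElem?_set_ne hki.symm]

theorem witness_eq_of_fetch (h : QStep s (.fetch i j) s') (hm : IsFrontier s m) : j = m := by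
  cases h with
  | fetch _ _ _ _ hj hjacc hjmark => exact (hm j _ hj hjacc).2 hjmark

theorem lt_of_fetch (h : QStep s (.fetch i j) s') (hm : IsFrontier s m) : m < i := by
  obtain rfl := h.witness_eq_of_fetch hm
  cases h
  assumption

theorem isFrontier_fetch (h : QStep s (.fetch i j) s') (hm : IsFrontier s m) :
    IsFrontier s' i := by
  have hjm := h.witness_eq_of_fetch hm
  have hmi := h.lt_of_fetch hm
  cases h
  intro k e hk hacc
  have := hm k e
  grind

theorem isFrontier_add {x : S} (h : QStep s (.add x) s') (hm : IsFrontier s m) :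
    IsFrontier s' m := by
  cases h
  intro k e hk hacc
  have := hm k e
  grind

theorem exists_isFrontier (h : QStep s ev s') (hm : IsFrontier s m) : ∃ m', IsFrontier s' m' := by
  cases ev with
  | add _ => exact ⟨m, h.isFrontier_add hm⟩
  | fetch i _ => exact ⟨i, h.isFrontier_fetch hm⟩

end QStep

namespace QRun

variable {s s' t : QStore S} {evs : List (QEvt S)}

theorem of_append {pre : List (QEvt S)} (h : QRun s (pre ++ evs) s') (ht : QRun s pre t) :
    QRun t evs s' := by
  induction ht with
  | nil => exact h
  | cons hstep _ ih =>
    cases h with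
    | cons hstep' hrest => exact ih (hstep.right_unique hstep' ▸ hrest)

theorem exists_isFrontier {m : ℕ} (h : QRun s evs s') (hm : IsFrontier s m) :
    ∃ m', IsFrontier s' m' := by
  induction h generalizing m with
  | nil => exact ⟨m, hm⟩
  | cons hstep _ ih =>
    obtain ⟨m', hm'⟩ := hstep.exists_isFrontier hm
    exact ih hm'

theorem getElem?_eq_of_lt_frontier {m k : ℕ} {e : QEntry S} (h : QRun s evs s')
    (hm : IsFrontier s m) (hk : k < m) (he : s[k]? = some e) (hacc : e.2.1 = false) :
    s'[k]? = some e := by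
  induction h generalizing m with
  | nil => exact he
  | @cons _ _ _ ev _ hstep _ ih =>
    cases ev with
    | add _ =>
      exact ih (hstep.isFrontier_add hm) hk (hstep.getElem?_eq_of_not_accessed he hacc (by simp))
    | fetch i _ =>
      have hmi := hstep.lt_of_fetch hm
      exact ih (hstep.isFrontier_fetch hm) (by omega)
        (hstep.getElem?_eq_of_not_accessed he hacc (by simp; omega))

end QRun

/-- In any sequence of ADD and FETCH operations on a Q-store
starting from the empty Q-store, if at the end every element of the Q-store has
been accessed, then the Q-store behaved as a queue: each FETCH accessed the
earliest unaccessed element of the store. -/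
theorem qstore_all_accessed_implies_fifo (S : Type)
    (evs : List (QEvt S)) (sf : QStore S)
    (hrun : QRun (emptyQStore S) evs sf)
    (hall : ∀ e ∈ sf, e.2.1 = true) :
    ∀ (pre : List (QEvt S)) (i j : ℕ) (post : List (QEvt S)) (t : QStore S),
      evs = pre ++ QEvt.fetch i j :: post →
      QRun (emptyQStore S) pre t →
      ∀ i', i' < i → ∃ e ∈ t[i']?, e.2.1 = true := by
  rintro pre i j post t rfl ht i' hi'
  obtain ⟨m, hm⟩ := ht.exists_isFrontier isFrontier_emptyQStore
  obtain _ | ⟨hstep, hpost⟩ := hrun.of_append ht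
  have hit := hstep.lt_length_of_fetch
  obtain ⟨e, he⟩ : ∃ e, t[i']? = some e := ⟨_, List.getElem?_eq_getElem (by omega)⟩
  refine ⟨e, he, ?_⟩
  by_contra hacc
  rw [Bool.not_eq_true] at hacc
  have hv := hstep.getElem?_eq_of_not_accessed he hacc (by simp; omega)
  have hsf := hpost.getElem?_eq_of_lt_frontier (hstep.isFrontier_fetch hm) hi' hv hacc
  simp [hall e (List.mem_of_getElem? hsf)] at hacc
end

section
/- Weak nested data class memory automata are closed under intersection: for any two WNDCMA A and B of level l over the same finite alphabet Σ and the same nested data set, there is a WNDCMA C with L(C) = L(A) ∩ L(B). -/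
/-! ### Nested data sets of level `l`: the canonical tree of depth `l` in which
every node of level `< l` has infinitely many children.  A node is a list of
natural numbers (its path from the root); its level is its length; `pred`
drops the last element. -/

def NDS (l : ℕ) : Type := {d : List ℕ // d.length ≤ l}

namespace NDS

/-- The level of a data value. -/
def level {l : ℕ} (d : NDS l) : ℕ := d.1.length

/-- The ancestor of `d` at level `j` (i.e. `pred^(level d - j) d`). -/
def anc {l : ℕ} (d : NDS l) (j : ℕ) : NDS l :=
  ⟨d.1.take j, le_trans (by rw [List.length_take]; exact min_le_right _ _) d.2⟩

/-- The level of a data value, as an element of `Fin (l+1)`. -/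
def levelFin {l : ℕ} (d : NDS l) : Fin (l + 1) := ⟨d.1.length, Nat.lt_succ_of_le d.2⟩

end NDS

/-! ### Weak nested data class memory automata (WNDCMA) of level `l` over an
alphabet. -/

/-- A weak nested data class memory automaton of level `l` over alphabet
`Alph`: a finite set of states, an initial state, final states, and for each
level `i ≤ l` a transition function taking the current state, the input letter
and the memory of the read data value and its ancestors
`(f(pred^i d), …, f(pred d), f(d))`, and returning a set of pairs of a new
state and new memory values for the data value and its ancestors. -/
structure WNDCMA (l : ℕ) (Alph : Type) where
  Q : Type
  finQ : Finite Q
  q0 : Q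
  F : Set Q
  δ : (i : Fin (l + 1)) → Q → Alph → (Fin (i.1 + 1) → Option Q) →
      Set (Q × (Fin (i.1 + 1) → Q))

/-- Update a class memory function on a data value and all of its ancestors. -/
noncomputable def updateCMF {l : ℕ} {Q : Type} (f : NDS l → Option Q) (d : NDS l)
    (t : Fin (d.1.length + 1) → Q) : NDS l → Option Q := fun e =>
  if h : e.1 <+: d.1 then some (t ⟨e.1.length, Nat.lt_succ_of_le h.length_le⟩)
  else f e

namespace WNDCMA

variable {l : ℕ} {Alph : Type}

/-- Runs of a WNDCMA on a data word, between configurations.  A configuration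
consists of a state and a class memory function. -/
inductive Run (A : WNDCMA l Alph) :
    A.Q × (NDS l → Option A.Q) → List (Alph × NDS l) → A.Q × (NDS l → Option A.Q) → Prop
  | nil (c) : Run A c [] c
  | cons {q f a q' w c'} {d : NDS l} {t : Fin (d.1.length + 1) → A.Q} :
      (q', t) ∈ A.δ d.levelFin q a (fun j => f (d.anc j.1)) →
      Run A (q', updateCMF f d t) w c' →
      Run A (q, f) ((a, d) :: w) c'

/-- The language of a WNDCMA: the data words on which some run from the initial
configuration ends in a final state. -/
def lang (A : WNDCMA l Alph) : Set (List (Alph × NDS l)) :=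
  {w | ∃ q f, Run A (A.q0, fun _ => none) w (q, f) ∧ q ∈ A.F}

/-- An automaton is deterministic if every value of its transition function is
a singleton. -/
def Deterministic (A : WNDCMA l Alph) : Prop :=
  ∀ (i : Fin (l + 1)) (q : A.Q) (a : Alph) (m : Fin (i.1 + 1) → Option A.Q),
    ∃ x, A.δ i q a m = {x}

end WNDCMA

/-!
The product construction works for class memory automata because on reading `(a, d)` both
automata overwrite the memory of exactly the same data values, `d` and its ancestors. Hence along
a joint run the two class memory functions are `⊥` at the same places, and a single class memory
function with values in pairs of states records both of them.
-/

noncomputable def WNDCMA.prod {l : ℕ} {Alph : Type} (A B : WNDCMA l Alph) : WNDCMA l Alph where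
  Q := A.Q × B.Q
  finQ := by have := A.finQ; have := B.finQ; infer_instance
  q0 := (A.q0, B.q0)
  F := A.F ×ˢ B.F
  δ i q a m :=
    {x | (x.1.1, fun j => (x.2 j).1) ∈ A.δ i q.1 a (fun j => (m j).map Prod.fst) ∧
         (x.1.2, fun j => (x.2 j).2) ∈ B.δ i q.2 a (fun j => (m j).map Prod.snd)}

lemma map_updateCMF {l : ℕ} {Q R : Type} (π : Q → R) (f : NDS l → Option Q) (d : NDS l)
    (t : Fin (d.1.length + 1) → Q) :
    (fun e => (updateCMF f d t e).map π) =
      updateCMF (fun e => (f e).map π) d (fun j => π (t j)) := by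
  funext e
  unfold updateCMF
  split_ifs <;> rfl

namespace WNDCMA.Run

variable {l : ℕ} {Alph : Type}

lemma map {A C : WNDCMA l Alph} (π : C.Q → A.Q)
    (hπ : ∀ i q a m q' t, (q', t) ∈ C.δ i q a m →
      (π q', fun j => π (t j)) ∈ A.δ i (π q) a (fun j => (m j).map π))
    {c c' : C.Q × (NDS l → Option C.Q)} {w : List (Alph × NDS l)} (hrun : Run C c w c') :
    Run A (π c.1, fun e => (c.2 e).map π) w (π c'.1, fun e => (c'.2 e).map π) := by
  induction hrun with
  | nil => exact .nil _
  | cons hδ _ ih =>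
    dsimp only at ih
    rw [map_updateCMF] at ih
    exact .cons (hπ _ _ _ _ _ _ hδ) ih

lemma exists_prod {A B : WNDCMA l Alph} {w : List (Alph × NDS l)}
    {qa qa' : A.Q} {qb qb' : B.Q}
    {h : NDS l → Option (A.Q × B.Q)} {f' : NDS l → Option A.Q} {g' : NDS l → Option B.Q}
    (hA : Run A (qa, fun e => (h e).map Prod.fst) w (qa', f'))
    (hB : Run B (qb, fun e => (h e).map Prod.snd) w (qb', g')) :
    ∃ h', Run (A.prod B) ((qa, qb), h) w ((qa', qb'), h') := by
  induction w generalizing qa qb h with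
  | nil =>
    cases hA
    cases hB
    exact ⟨h, .nil _⟩
  | cons ad w ih =>
    cases hA with
    | @cons _ _ _ qa₁ _ _ d t hδA hrestA =>
    cases hB with
    | @cons _ _ _ qb₁ _ _ _ s hδB hrestB =>
    obtain ⟨h', hrun⟩ := ih (h := updateCMF h d fun j => (t j, s j))
      (by rw [map_updateCMF]; exact hrestA) (by rw [map_updateCMF]; exact hrestB)
    exact ⟨h', .cons (show ((qa₁, qb₁), fun j => (t j, s j)) ∈ _ from ⟨hδA, hδB⟩)
      hrun⟩

end WNDCMA.Run

theorem wndcma_closed_under_intersection_general (l : ℕ) (Alph : Type)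
    (A B : WNDCMA l Alph) :
    ∃ C : WNDCMA l Alph, C.lang = A.lang ∩ B.lang := by
  refine ⟨A.prod B, Set.ext fun w => ⟨?_, ?_⟩⟩
  · rintro ⟨q, h, hrun, hqA, hqB⟩
    exact ⟨⟨q.1, _, hrun.map Prod.fst fun _ _ _ _ _ _ => And.left, hqA⟩,
      ⟨q.2, _, hrun.map Prod.snd fun _ _ _ _ _ _ => And.right, hqB⟩⟩
  · rintro ⟨⟨qa, f, hA, hqa⟩, ⟨qb, g, hB, hqb⟩⟩
    obtain ⟨h', hrun⟩ := WNDCMA.Run.exists_prod (h := fun _ => none) hA hB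
    exact ⟨_, h', hrun, hqa, hqb⟩

/-- Weak nested data class memory automata are closed under
intersection: for any two WNDCMA of level `l` over the same finite alphabet and
the same nested data set there is a WNDCMA recognising the intersection of
their languages. -/
theorem wndcma_closed_under_intersection (l : ℕ) (Alph : Type) [Finite Alph]
    (A B : WNDCMA l Alph) :
    ∃ C : WNDCMA l Alph, C.lang = A.lang ∩ B.lang :=
  wndcma_closed_under_intersection_general l Alph A B
end

section
/- No weak nested data class memory automaton over the one-letter alphabet {a} and a nested data set of level 1 recognises the language { (a,d₁)(a,d₂)…(a,dₙ)(a,dₙ)…(a,d₂)(a,d₁) : n ≥ 1 and d₁,…,dₙ are pairwise distinct level-1 data values }. -/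
/-- The language `{ (a,d₁)…(a,dₙ)(a,dₙ)…(a,d₁) : n ≥ 1, the dᵢ pairwise
distinct level-1 data values }` over the one-letter alphabet. -/
def palindromeDataLang : Set (List (Unit × NDS 1)) :=
  {w | ∃ ds : List (NDS 1), ds ≠ [] ∧ ds.Nodup ∧ (∀ d ∈ ds, d.level = 1) ∧
    w = (ds ++ ds.reverse).map fun d => (((), d) : Unit × NDS 1)}

/-!
A WNDCMA cannot tell apart data values that are swapped by an automorphism of the nested data
set: relabelling the data of a run and composing its class memory functions with the inverse
relabelling gives again a run. Read the first half `(a,d₁)…(a,dₙ)` of a word of the language,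
with `n` larger than the number of possible memory values. Two of the `dᵢ`, say `x` and `y`,
then carry the same memory value, so the memory function is invariant under swapping them, and
the run on the second half can be replaced by a run on the second half with `x` and `y` swapped.
The resulting accepted word is not a palindrome, but every word of the language is.
-/

namespace NDS

variable {l : ℕ}

instance : DecidableEq (NDS l) := inferInstanceAs (DecidableEq {d : List ℕ // d.length ≤ l})

theorem isPrefix_iff_eq_anc {e d : NDS l} : e.1 <+: d.1 ↔ e = d.anc e.level := by
  rw [List.prefix_iff_eq_take]
  exact ⟨fun h => Subtype.ext h, congrArg Subtype.val⟩

theorem anc_of_level_le {d : NDS l} {j : ℕ} (h : d.level ≤ j) : d.anc j = d :=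
  Subtype.ext (List.take_of_length_le h)

theorem infinite_setOf_level_eq_one : {d : NDS 1 | d.level = 1}.Infinite :=
  Set.infinite_of_injective_forall_mem (f := fun k : ℕ => (⟨[k], le_rfl⟩ : NDS 1))
    (fun _ _ h => List.singleton_injective (congrArg Subtype.val h)) (fun _ => rfl)

structure IsAutomorphism (σ : Equiv.Perm (NDS l)) : Prop where
  level_apply (d : NDS l) : (σ d).level = d.level
  apply_anc (d : NDS l) (j : ℕ) : σ (d.anc j) = (σ d).anc j

theorem IsAutomorphism.isPrefix_iff {σ : Equiv.Perm (NDS l)} (hσ : IsAutomorphism σ)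
    {e d : NDS l} : (σ e).1 <+: (σ d).1 ↔ e.1 <+: d.1 := by
  rw [isPrefix_iff_eq_anc, isPrefix_iff_eq_anc, hσ.level_apply, ← hσ.apply_anc,
    σ.apply_eq_iff_eq]

theorem isAutomorphism_swap {x y : NDS 1} (hx : x.level = 1) (hy : y.level = 1) :
    IsAutomorphism (Equiv.swap x y) where
  level_apply d := by
    rw [Equiv.swap_apply_def]
    split_ifs with hdx hdy
    · rw [hdx, hx, hy]
    · rw [hdy, hx, hy]
    · rfl
  apply_anc d j := by
    cases j with
    | zero =>
      have hroot : ∀ e : NDS 1, e.anc 0 = ⟨[], zero_le_one⟩ := fun _ => rfl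
      rw [hroot, hroot]
      refine Equiv.swap_apply_of_ne_of_ne ?_ ?_ <;> rintro rfl
      exacts [absurd hx zero_ne_one, absurd hy zero_ne_one]
    | succ j =>
      rw [anc_of_level_le ((d.2).trans (Nat.le_add_left 1 j)),
        anc_of_level_le (((Equiv.swap x y) d).2.trans (Nat.le_add_left 1 j))]

end NDS

theorem NDS.IsAutomorphism.updateCMF_comp_symm {l : ℕ} {Q : Type} {σ : Equiv.Perm (NDS l)}
    (hσ : IsAutomorphism σ) (f : NDS l → Option Q) (d : NDS l) (t : Fin (d.1.length + 1) → Q) :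
    updateCMF (f ∘ σ.symm) (σ d) (t ∘ Fin.cast (congrArg (· + 1) (hσ.level_apply d))) =
      updateCMF f d t ∘ σ.symm := by
  funext e
  obtain ⟨e, rfl⟩ := σ.surjective e
  simp only [updateCMF, Function.comp_apply, σ.symm_apply_apply, hσ.isPrefix_iff]
  split_ifs
  · exact congrArg (some ∘ t) (Fin.ext (hσ.level_apply e))
  · rfl

namespace WNDCMA

variable {l : ℕ} {Alph : Type} {A : WNDCMA l Alph}

theorem run_append_iff {u v : List (Alph × NDS l)} {c c'' : A.Q × (NDS l → Option A.Q)} :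
    A.Run c (u ++ v) c'' ↔ ∃ c', A.Run c u c' ∧ A.Run c' v c'' := by
  induction u generalizing c with
  | nil => exact ⟨fun h => ⟨c, .nil c, h⟩, fun ⟨_, .nil _, h⟩ => h⟩
  | cons p u ih =>
    constructor
    · rintro (_ | ⟨hδ, hrun⟩)
      obtain ⟨c', hu, hv⟩ := ih.1 hrun
      exact ⟨c', .cons hδ hu, hv⟩
    · rintro ⟨c', _ | ⟨hδ, hu⟩, hv⟩
      exact .cons hδ (ih.2 ⟨c', hu, hv⟩)

theorem mem_δ_cast {i₁ i₂ : Fin (l + 1)} (h : i₂ = i₁) {q q' : A.Q} {a : Alph}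
    {m : ℕ → Option A.Q} {t : Fin (i₁.1 + 1) → A.Q}
    (hδ : (q', t) ∈ A.δ i₁ q a (fun j => m j.1)) :
    (q', t ∘ Fin.cast (congrArg (fun i : Fin (l + 1) => i.1 + 1) h)) ∈
      A.δ i₂ q a (fun j => m j.1) := by
  subst h
  exact hδ

theorem Run.map_automorphism {σ : Equiv.Perm (NDS l)} (hσ : NDS.IsAutomorphism σ)
    {c c' : A.Q × (NDS l → Option A.Q)} {w : List (Alph × NDS l)} (h : A.Run c w c') :
    A.Run (c.1, c.2 ∘ σ.symm) (w.map (Prod.map id σ)) (c'.1, c'.2 ∘ σ.symm) := by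
  induction h with
  | nil c => exact .nil _
  | @cons q f a q' w c' d t hδ _ ih =>
    have hmem : (fun j : Fin ((σ d).levelFin.1 + 1) => (f ∘ σ.symm) ((σ d).anc j.1)) =
        fun j => f (d.anc j.1) := by
      funext j
      rw [Function.comp_apply, ← hσ.apply_anc, σ.symm_apply_apply]
    refine .cons (d := σ d) (q' := q')
      (t := t ∘ Fin.cast (congrArg (· + 1) (hσ.level_apply d))) ?_ ?_
    · rw [hmem]
      exact mem_δ_cast (m := fun j => f (d.anc j)) (Fin.ext (hσ.level_apply d)) hδ
    · rw [hσ.updateCMF_comp_symm]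
      exact ih

end WNDCMA

theorem reverse_eq_of_mem_palindromeDataLang {w : List (Unit × NDS 1)}
    (hw : w ∈ palindromeDataLang) : w.reverse = w := by
  obtain ⟨ds, -, -, -, rfl⟩ := hw
  rw [← List.map_reverse, List.reverse_append, List.reverse_reverse]

theorem append_map_reverse_notMem_palindromeDataLang {u : List (Unit × NDS 1)}
    {τ : Unit × NDS 1 → Unit × NDS 1} {p : Unit × NDS 1} (hp : p ∈ u) (hτp : τ p ≠ p) :
    u ++ u.reverse.map τ ∉ palindromeDataLang := by
  intro hw
  have hpal := reverse_eq_of_mem_palindromeDataLang hw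
  rw [List.reverse_append, ← List.map_reverse, List.reverse_reverse] at hpal
  have hfix : u.map τ = u.map id := (List.append_inj hpal (by simp)).1.trans (List.map_id u).symm
  exact hτp (List.map_inj_left.1 hfix p hp)

/-- No weak nested data class memory automaton over the
one-letter alphabet and a nested data set of level 1 recognises the language
`{ (a,d₁)…(a,dₙ)(a,dₙ)…(a,d₁) }` with the `dᵢ` pairwise distinct level-1 data
values. -/
theorem wndcma_cannot_recognise_palindromeDataLang :
    ∀ A : WNDCMA 1 Unit, A.lang ≠ palindromeDataLang := by
  intro A hA
  have := A.finQ
  have := Fintype.ofFinite (Option A.Q)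
  obtain ⟨s, hs, hcard⟩ :=
    NDS.infinite_setOf_level_eq_one.exists_subset_card_eq (Fintype.card (Option A.Q) + 1)
  let u : List (Unit × NDS 1) := s.toList.map fun d => ((), d)
  have hu : u ++ u.reverse ∈ A.lang := by
    rw [hA, ← List.map_reverse, ← List.map_append]
    refine ⟨s.toList, ?_, s.nodup_toList, fun d hd => hs (s.mem_toList.1 hd), rfl⟩
    rw [ne_eq, Finset.toList_eq_nil, ← Finset.card_eq_zero, hcard]
    exact Nat.succ_ne_zero _
  obtain ⟨qF, fF, hrun, hF⟩ := hu
  obtain ⟨⟨q₁, f₁⟩, hrun₁, hrun₂⟩ := WNDCMA.run_append_iff.1 hrun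
  obtain ⟨x, hx, y, hy, hxy, hf₁xy⟩ := Finset.exists_ne_map_eq_of_card_lt_of_maps_to
    (t := Finset.univ) (by rw [hcard, Finset.card_univ]; exact Nat.lt_succ_self _)
    (f := f₁) (fun _ _ => Finset.mem_coe.2 (Finset.mem_univ _))
  let σ := Equiv.swap x y
  have hf₁ : f₁ ∘ σ.symm = f₁ := by
    rw [Equiv.symm_swap, Equiv.comp_swap_eq_update, hf₁xy, Function.update_eq_self, ← hf₁xy,
      Function.update_eq_self]
  have hrun₂' := hrun₂.map_automorphism (NDS.isAutomorphism_swap (hs hx) (hs hy))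
  rw [hf₁] at hrun₂'
  have hacc : u ++ u.reverse.map (Prod.map id σ) ∈ A.lang :=
    ⟨qF, fF ∘ σ.symm, WNDCMA.run_append_iff.2 ⟨_, hrun₁, hrun₂'⟩, hF⟩
  rw [hA] at hacc
  refine append_map_reverse_notMem_palindromeDataLang
    (List.mem_map_of_mem (s.mem_toList.2 hx)) (fun h => hxy ?_) hacc
  exact (congrArg Prod.snd h).symm.trans (Equiv.swap_apply_left x y)
end
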